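/- arXiv:2401.06138 — 3 statements merged into one kernel-verified Lean document; each statement's English description precedes it below -/
import Mathlib

section
/- Let A be an infinite-dimensional unital simple C*-algebra and let b ∈ A be a nonzero positive element. Then there exist positive elements b₁, b₂ ∈ A of norm one such that b₁b₂ = 0, b₁ is Cuntz equivalent to b₂, and b₁ + b₂ is Cuntz subequivalent to b. -/
/-- `a` is Cuntz subequivalent to `b` in the C*-algebra `A`: there is a sequence
`(rₙ)` in `A` with `‖rₙ * b * rₙ* - a‖ → 0`. -/
def CuntzSubeq {A : Type*} [NonUnitalCStarAlgebra A] (a b : A) : Prop :=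
  ∃ r : ℕ → A,
    Filter.Tendsto (fun n => ‖r n * b * star (r n) - a‖) Filter.atTop (nhds 0)

/-- A C*-algebra is simple if it has no closed two-sided ideals other than
`⊥` and `⊤`. -/
def IsSimpleCStarAlgebra (A : Type*) [NonUnitalCStarAlgebra A] : Prop :=
  ∀ I : TwoSidedIdeal A, IsClosed (I : Set A) → I = ⊥ ∨ I = ⊤

/-!
If `b` dominates two nonzero orthogonal positive elements `f` and `h`, simplicity gives `z` with
`x = √f z √h ≠ 0`. Then `x² = 0`, so the normalisations of `x x*` and `x* x` are orthogonal; they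
are Cuntz equivalent because `y y* ≾ y* y` for every `y`, and their sum is dominated by a multiple
of `f + h ≤ b`. If `b` dominates no such pair, neither does any positive element of `b A b`, so each
of them has spectrum in `{0, ‖·‖}`. Then `q = b / ‖b‖` is a projection with `q A q = ℂ q`, and a
simple unital C*-algebra with such a projection is finite-dimensional.
-/

section CuntzComparison

variable {A : Type*} [CStarAlgebra A]

lemma CuntzSubeq.of_smul_right {a b : A} {K : ℝ} (hK : 0 ≤ K) (h : CuntzSubeq a (K • b)) :
    CuntzSubeq a b := by
  obtain ⟨r, hr⟩ := h
  refine ⟨fun n => √K • r n, ?_⟩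
  convert hr using 4 with n
  rw [star_smul, star_trivial, smul_mul_assoc, smul_mul_assoc, mul_smul_comm, smul_smul,
    Real.mul_self_sqrt hK, mul_smul_comm, smul_mul_assoc]

variable [PartialOrder A] [StarOrderedRing A]

lemma exists_conj_eq_one_sub_mul_self_of_nonneg {c : A} (hc : 0 ≤ c) {ε : ℝ} (hε : 0 < ε) :
    ∃ d s : A, IsSelfAdjoint d ∧ IsSelfAdjoint s ∧ d * c * d = 1 - s * s ∧ ‖s * c * s‖ ≤ ε := by
  have hpos : ∀ t ∈ spectrum ℝ c, 0 < t + ε := fun t ht => by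
    linarith [spectrum_nonneg_of_nonneg hc ht]
  set d : ℝ → ℝ := fun t => (√(t + ε))⁻¹
  set s : ℝ → ℝ := fun t => √(ε / (t + ε))
  have hd : ContinuousOn d (spectrum ℝ c) :=
    (Real.continuous_sqrt.comp_continuousOn (by fun_prop)).inv₀
      fun t ht => (Real.sqrt_pos.mpr (hpos t ht)).ne'
  have hs : ContinuousOn s (spectrum ℝ c) :=
    Real.continuous_sqrt.comp_continuousOn
      (continuousOn_const.div (by fun_prop) fun t ht => (hpos t ht).ne')
  have hconj : ∀ g : ℝ → ℝ, ContinuousOn g (spectrum ℝ c) →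
      cfc g c * c * cfc g c = cfc (fun t => g t * t * g t) c := fun g hg => by
    rw [cfc_mul (fun t => g t * t) g c (hg.mul continuousOn_id) hg,
      cfc_mul g (fun t => t) c hg continuousOn_id, cfc_id' ℝ c]
  refine ⟨cfc d c, cfc s c, cfc_predicate d c, cfc_predicate s c, ?_, ?_⟩
  · rw [hconj d hd, ← cfc_mul s s c hs hs, ← cfc_one ℝ c, ← cfc_sub _ _ c]
    refine cfc_congr fun t ht => ?_
    have h := hpos t ht
    simp only [d, s, Pi.one_apply, Real.mul_self_sqrt (div_nonneg hε.le h.le)]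
    field_simp
    rw [Real.sq_sqrt h.le]
    ring
  · rw [hconj s hs]
    refine norm_cfc_le hε.le fun t ht => ?_
    have h := hpos t ht
    have ht0 := spectrum_nonneg_of_nonneg hc ht
    have hst : s t * t * s t = t * ε / (t + ε) := by
      simp only [s]
      rw [mul_comm, ← mul_assoc, Real.mul_self_sqrt (div_nonneg hε.le h.le)]
      ring
    rw [hst, Real.norm_of_nonneg (by positivity), div_le_iff₀ h]
    nlinarith

lemma exists_norm_conj_sub_mul_star_le {y c : A} (hyc : star y * y ≤ c) {ε : ℝ} (hε : 0 < ε) :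
    ∃ r : A, ‖r * c * star r - y * star y‖ ≤ ε := by
  obtain ⟨d, s, hd, hs, hdcd, hscs⟩ :=
    exists_conj_eq_one_sub_mul_self_of_nonneg ((star_mul_self_nonneg y).trans hyc) hε
  refine ⟨y * d, ?_⟩
  have hdiff : y * d * c * star (y * d) - y * star y = -((y * s) * star (y * s)) := by
    rw [star_mul, star_mul, hd.star_eq, hs.star_eq,
      show y * d * c * (d * star y) = y * (d * c * d) * star y by noncomm_ring, hdcd]
    noncomm_ring
  calc ‖y * d * c * star (y * d) - y * star y‖ = ‖s * (star y * y) * s‖ := by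
        rw [hdiff, norm_neg, CStarRing.norm_self_mul_star, ← CStarRing.norm_star_mul_self,
          star_mul, hs.star_eq]
        noncomm_ring
    _ ≤ ‖s * c * s‖ := by
        have h0 := star_left_conjugate_nonneg (star_mul_self_nonneg y) s
        have hle := star_left_conjugate_le_conjugate hyc s
        rw [hs.star_eq] at h0 hle
        exact CStarAlgebra.norm_le_norm_of_nonneg_of_le h0 hle
    _ ≤ ε := hscs

lemma cuntzSubeq_mul_star_of_star_mul_le {y c : A} (hyc : star y * y ≤ c) :
    CuntzSubeq (y * star y) c := by
  choose r hr using fun n : ℕ =>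
    exists_norm_conj_sub_mul_star_le hyc (Nat.one_div_pos_of_nat (n := n))
  exact ⟨r, squeeze_zero (fun _ => norm_nonneg _) hr tendsto_one_div_add_atTop_nhds_zero_nat⟩

lemma cuntzSubeq_of_le_smul {a b : A} {K : ℝ} (ha : 0 ≤ a) (hK : 0 ≤ K) (hab : a ≤ K • b) :
    CuntzSubeq a b := by
  refine CuntzSubeq.of_smul_right hK ?_
  have hsqrt := (IsSelfAdjoint.of_nonneg (CFC.sqrt_nonneg a)).star_eq
  simpa only [hsqrt, CFC.sqrt_mul_sqrt_self a ha] using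
    cuntzSubeq_mul_star_of_star_mul_le (y := CFC.sqrt a) (c := K • b)
      (by rwa [hsqrt, CFC.sqrt_mul_sqrt_self a ha])

lemma cuntzSubeq_smul_mul_star_self {c : ℝ} (hc : 0 ≤ c) (x : A) :
    CuntzSubeq (c • (x * star x)) (c • (star x * x)) := by
  have hsmul : ∀ u v : A, (√c • u) * (√c • v) = c • (u * v) := fun u v => by
    rw [smul_mul_smul_comm, Real.mul_self_sqrt hc]
  have hstar : star (√c • x) = √c • star x := by rw [star_smul, star_trivial]
  simpa only [hstar, hsmul] using
    cuntzSubeq_mul_star_of_star_mul_le (y := √c • x) (by rw [hstar, hsmul])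

end CuntzComparison

def TwoSidedIdeal.topologicalClosure {R : Type*} [Ring R] [TopologicalSpace R]
    [IsTopologicalRing R] (I : TwoSidedIdeal R) : TwoSidedIdeal R :=
  .mk' (closure I) (subset_closure I.zero_mem)
    (fun hx hy => map_mem_closure₂ continuous_add hx hy fun _ ha _ hb => I.add_mem ha hb)
    (fun hx => map_mem_closure continuous_neg hx fun _ => I.neg_mem)
    (fun {x _} hy => map_mem_closure (f := (x * ·)) (continuous_const_mul x) hy
      fun _ => I.mul_mem_left x _)
    (fun {_ y} hx => map_mem_closure (f := (· * y)) (continuous_mul_const y) hx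
      fun _ => I.mul_mem_right _ y)

@[simp]
lemma TwoSidedIdeal.coe_topologicalClosure {R : Type*} [Ring R] [TopologicalSpace R]
    [IsTopologicalRing R] (I : TwoSidedIdeal R) :
    (I.topologicalClosure : Set R) = closure I :=
  TwoSidedIdeal.coe_mk' ..

section Simple

open scoped Pointwise

variable {A : Type*} [CStarAlgebra A]

lemma TwoSidedIdeal.span_singleton_eq_top_of_isSimple (hsimple : IsSimpleCStarAlgebra A)
    {x : A} (hx : x ≠ 0) : TwoSidedIdeal.span {x} = ⊤ := by
  set I := TwoSidedIdeal.span {x}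
  have hclosed : IsClosed (I.topologicalClosure : Set A) := by simp
  have hxI : x ∈ I.topologicalClosure := by
    rw [← SetLike.mem_coe, TwoSidedIdeal.coe_topologicalClosure]
    exact subset_closure (TwoSidedIdeal.subset_span (Set.mem_singleton x))
  have hone : (1 : A) ∈ closure (I : Set A) := by
    rcases hsimple _ hclosed with hbot | htop
    · rw [hbot] at hxI
      exact absurd ((TwoSidedIdeal.mem_bot A).mp hxI) hx
    · rw [← TwoSidedIdeal.coe_topologicalClosure, htop]
      trivial
  obtain ⟨v, ⟨u, rfl⟩, hv⟩ := mem_closure_iff.mp hone _ Units.isOpen isUnit_one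
  rw [← TwoSidedIdeal.one_mem_iff, ← u.inv_mul]
  exact I.mul_mem_left _ _ hv

lemma exists_mul_mul_ne_zero (hsimple : IsSimpleCStarAlgebra A) {x y : A} (hx : x ≠ 0)
    (hy : y ≠ 0) : ∃ z, x * z * y ≠ 0 := by
  by_contra! h
  have hone : (1 : A) ∈ AddSubgroup.closure (Set.univ * {y} * Set.univ) := by
    rw [← TwoSidedIdeal.mem_span_iff_mem_addSubgroup_closure,
      TwoSidedIdeal.span_singleton_eq_top_of_isSimple hsimple hy]
    trivial
  have hker : AddSubgroup.closure (Set.univ * {y} * Set.univ) ≤ (AddMonoidHom.mulLeft x).ker := by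
    rw [AddSubgroup.closure_le]
    rintro _ ⟨_, ⟨a, -, _, rfl, rfl⟩, b, -, rfl⟩
    simp [← mul_assoc, h]
  exact hx (by simpa using hker hone)

lemma finiteDimensional_of_forall_mul_mul_eq_smul (hsimple : IsSimpleCStarAlgebra A) {q : A}
    (hq : q ≠ 0) (hcorner : ∀ z : A, ∃ c : ℂ, q * z * q = c • q) : FiniteDimensional ℂ A := by
  set g : A × A → A := fun p => p.1 * q * p.2
  have hone : (1 : A) ∈ Submodule.span ℂ (Set.range g) := by
    have h := (TwoSidedIdeal.one_mem_iff _).mpr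
      (TwoSidedIdeal.span_singleton_eq_top_of_isSimple hsimple hq)
    rw [TwoSidedIdeal.mem_span_iff_mem_addSubgroup_closure] at h
    refine (AddSubgroup.closure_le (K := (Submodule.span ℂ (Set.range g)).toAddSubgroup)).mpr
      ?_ h
    rintro _ ⟨_, ⟨a, -, _, rfl, rfl⟩, b, -, rfl⟩
    exact Submodule.subset_span ⟨(a, b), rfl⟩
  obtain ⟨c, hc⟩ := Finsupp.mem_span_range_iff_exists_finsupp.mp hone
  set P := c.support
  refine Module.finite_def.mpr (Submodule.fg_def.mpr
    ⟨Set.range fun pp : P × P => pp.1.1.1 * q * pp.2.1.2, Set.finite_range _, ?_⟩)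
  refine eq_top_iff.mpr fun y _ => ?_
  rw [← one_mul y, ← mul_one (1 * y), ← hc, Finsupp.sum, Finset.sum_mul, Finset.sum_mul]
  refine Submodule.sum_mem _ fun p hp => ?_
  rw [Finset.mul_sum]
  refine Submodule.sum_mem _ fun p' hp' => ?_
  obtain ⟨γ, hγ⟩ := hcorner (p.2 * y * p'.1)
  have hterm : c p • g p * y * (c p' • g p') = (c p * c p' * γ) • (p.1 * q * p'.2) := by
    simp only [g, smul_mul_assoc, mul_smul_comm, smul_smul]
    rw [show p.1 * q * p.2 * y * (p'.1 * q * p'.2) = p.1 * (q * (p.2 * y * p'.1) * q) * p'.2 by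
      noncomm_ring, hγ, mul_smul_comm, smul_mul_assoc, smul_smul, mul_comm (c p')]
  rw [hterm]
  exact Submodule.smul_mem _ _ (Submodule.subset_span ⟨(⟨p, hp⟩, ⟨p', hp'⟩), rfl⟩)

end Simple

def HasOrthogonalPairBelow {A : Type*} [NonUnitalRing A] [PartialOrder A] (a : A) : Prop :=
  ∃ f h : A, 0 ≤ f ∧ 0 ≤ h ∧ f ≠ 0 ∧ h ≠ 0 ∧ f * h = 0 ∧ f + h ≤ a

section OrthogonalPairs

variable {A : Type*} [CStarAlgebra A] [PartialOrder A] [StarOrderedRing A]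

lemma HasOrthogonalPairBelow.of_le_smul {a b : A} {K : ℝ} (hab : HasOrthogonalPairBelow a)
    (hK : 0 < K) (hle : a ≤ K • b) : HasOrthogonalPairBelow b := by
  obtain ⟨f, h, hf, hh, hf0, hh0, hfh, hfha⟩ := hab
  have hK' : 0 < K⁻¹ := inv_pos.mpr hK
  refine ⟨K⁻¹ • f, K⁻¹ • h, smul_nonneg hK'.le hf, smul_nonneg hK'.le hh,
    smul_ne_zero hK'.ne' hf0, smul_ne_zero hK'.ne' hh0, by rw [smul_mul_smul_comm, hfh, smul_zero],
    ?_⟩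
  calc K⁻¹ • f + K⁻¹ • h = K⁻¹ • (f + h) := (smul_add ..).symm
    _ ≤ K⁻¹ • (K • b) := smul_le_smul_of_nonneg_left (hfha.trans hle) hK'.le
    _ = b := inv_smul_smul₀ hK.ne' b

lemma hasOrthogonalPairBelow_of_mem_spectrum {a : A} (ha : 0 ≤ a) {t₁ t₂ : ℝ}
    (ht₁ : t₁ ∈ spectrum ℝ a) (ht₂ : t₂ ∈ spectrum ℝ a) (h0 : 0 < t₁) (h12 : t₁ < t₂) :
    HasOrthogonalPairBelow a := by
  set m := (t₁ + t₂) / 2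
  set g₁ : ℝ → ℝ := fun t => max 0 (min t (m - t))
  set g₂ : ℝ → ℝ := fun t => max 0 (t - m)
  have hg₁ : Continuous g₁ := by fun_prop
  have hg₂ : Continuous g₂ := by fun_prop
  have hm₁ : t₁ < m := by simp only [m]; linarith
  have hm₂ : m < t₂ := by simp only [m]; linarith
  have hcfc_ne_zero : ∀ g : ℝ → ℝ, Continuous g → ∀ t ∈ spectrum ℝ a, g t ≠ 0 → cfc g a ≠ 0 :=
    fun g hg t ht hgt hzero =>
      hgt (eqOn_of_cfc_eq_cfc (hzero.trans (cfc_zero ℝ a).symm) hg.continuousOn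
        continuousOn_const (.of_nonneg ha) ht)
  refine ⟨cfc g₁ a, cfc g₂ a, cfc_nonneg fun t _ => le_max_left _ _,
    cfc_nonneg fun t _ => le_max_left _ _, hcfc_ne_zero g₁ hg₁ t₁ ht₁ ?_,
    hcfc_ne_zero g₂ hg₂ t₂ ht₂ ?_, ?_, ?_⟩
  · exact (lt_max_of_lt_right (lt_min h0 (by linarith))).ne'
  · exact (lt_max_of_lt_right (by linarith : 0 < t₂ - m)).ne'
  · rw [← cfc_mul g₁ g₂ a, ← cfc_zero ℝ a]
    refine cfc_congr fun t _ => ?_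
    rcases le_total t m with htm | htm
    · simp [g₂, htm]
    · simp [g₁, htm]
  · rw [← cfc_add (a := a) g₁ g₂]
    conv_rhs => rw [← cfc_id' ℝ a]
    refine cfc_mono fun t ht => ?_
    have ht0 := spectrum_nonneg_of_nonneg ha ht
    simp only [g₁, g₂]
    rcases le_total t m with htm | htm
    · rw [max_eq_left (by linarith : t - m ≤ 0), add_zero]
      exact max_le ht0 (min_le_left t (m - t))
    · rw [max_eq_left (min_le_right t (m - t) |>.trans (by linarith)), zero_add]
      exact max_le ht0 (by linarith)

lemma mul_self_eq_norm_smul_of_not_hasOrthogonalPairBelow {a : A} (ha : 0 ≤ a)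
    (hna : ¬ HasOrthogonalPairBelow a) : a * a = ‖a‖ • a := by
  rcases subsingleton_or_nontrivial A with _ | _
  · exact Subsingleton.elim _ _
  have hspec : ∀ t ∈ spectrum ℝ a, t = 0 ∨ t = ‖a‖ := by
    intro t ht
    by_contra! hne
    have h1 : t ≤ ‖a‖ := (Real.le_norm_self t).trans (spectrum.norm_le_norm_of_mem ht)
    exact hna (hasOrthogonalPairBelow_of_mem_spectrum ha ht
      (CStarAlgebra.norm_mem_spectrum_of_nonneg ha)
      ((spectrum_nonneg_of_nonneg ha ht).lt_of_ne' hne.1) (h1.lt_of_ne hne.2))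
  calc a * a = cfc (fun t : ℝ => t * t) a := by
        rw [cfc_mul (fun t : ℝ => t) (fun t : ℝ => t) a, cfc_id' ℝ a]
    _ = cfc (fun t : ℝ => ‖a‖ * t) a := cfc_congr fun t ht => by
        rcases hspec t ht with rfl | rfl <;> ring
    _ = ‖a‖ • a := cfc_const_mul_id ‖a‖ a

/- `q a q` and `‖q a q‖ • q - q a q` are orthogonal, because `q a q` is a multiple of a
projection, and they add up to a multiple of `q`. -/
lemma exists_mul_mul_eq_smul_of_nonneg {q a : A} (hq : IsStarProjection q)
    (hnq : ¬ HasOrthogonalPairBelow q) (ha : 0 ≤ a) : ∃ r : ℝ, q * a * q = r • q := by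
  set a' := q * a * q
  have hqq : q * q = q := hq.isIdempotentElem
  have ha' : 0 ≤ a' := by
    simpa only [hq.isSelfAdjoint.star_eq] using star_left_conjugate_nonneg ha q
  have ha'q : a' * q = a' := by simp only [a', mul_assoc, hqq]
  have hqa' : q * a' * q = a' := by
    rw [show q * a' * q = q * q * a * (q * q) by simp only [a', mul_assoc], hqq]
  by_cases h0 : a' = 0
  · exact ⟨0, by rw [h0, zero_smul]⟩
  set μ := ‖a'‖
  have hμ : 0 < μ := norm_pos_iff.mpr h0
  have hle : a' ≤ μ • q := by
    simpa only [hq.isSelfAdjoint.star_eq, hqa', hqq] using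
      CStarAlgebra.star_left_conjugate_le_norm_smul (a := q) (b := a') (.of_nonneg ha')
  have hsq : a' * a' = μ • a' := mul_self_eq_norm_smul_of_not_hasOrthogonalPairBelow ha'
    fun h => hnq (h.of_le_smul hμ hle)
  refine ⟨μ, (sub_eq_zero.mp ?_).symm⟩
  by_contra hne
  refine hnq (HasOrthogonalPairBelow.of_le_smul ?_ hμ le_rfl)
  exact ⟨a', μ • q - a', ha', sub_nonneg.mpr hle, h0, hne,
    by rw [mul_sub, mul_smul_comm, ha'q, hsq, sub_self], by rw [add_sub_cancel]⟩

lemma exists_mul_mul_eq_smul_of_not_hasOrthogonalPairBelow {q : A} (hq : IsStarProjection q)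
    (hnq : ¬ HasOrthogonalPairBelow q) (z : A) : ∃ c : ℂ, q * z * q = c • q := by
  have hz : z ∈ Submodule.span ℂ {a : A | 0 ≤ a} := by
    rw [CStarAlgebra.span_nonneg]
    trivial
  induction hz using Submodule.span_induction with
  | mem a ha =>
    obtain ⟨r, hr⟩ := exists_mul_mul_eq_smul_of_nonneg hq hnq ha
    exact ⟨r, by rw [hr, Complex.coe_smul]⟩
  | zero => exact ⟨0, by simp⟩
  | add x y _ _ hx hy =>
    obtain ⟨cx, hcx⟩ := hx
    obtain ⟨cy, hcy⟩ := hy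
    exact ⟨cx + cy, by rw [mul_add, add_mul, hcx, hcy, add_smul]⟩
  | smul c x _ hx =>
    obtain ⟨cx, hcx⟩ := hx
    exact ⟨c * cx, by rw [mul_smul_comm, smul_mul_assoc, hcx, smul_smul]⟩

lemma hasOrthogonalPairBelow_of_isSimple (hsimple : IsSimpleCStarAlgebra A)
    (hinfdim : ¬ FiniteDimensional ℂ A) {b : A} (hb : 0 ≤ b) (hb0 : b ≠ 0) :
    HasOrthogonalPairBelow b := by
  by_contra hnb
  have hnorm : 0 < ‖b‖ := norm_pos_iff.mpr hb0
  set q := ‖b‖⁻¹ • b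
  have hq : IsStarProjection q := by
    refine ⟨?_, .of_nonneg (smul_nonneg (inv_nonneg.mpr hnorm.le) hb)⟩
    rw [IsIdempotentElem, smul_mul_smul_comm,
      mul_self_eq_norm_smul_of_not_hasOrthogonalPairBelow hb hnb, smul_smul, mul_assoc,
      inv_mul_cancel₀ hnorm.ne', mul_one]
  have hnq : ¬ HasOrthogonalPairBelow q := fun h => hnb (h.of_le_smul (inv_pos.mpr hnorm) le_rfl)
  exact hinfdim (finiteDimensional_of_forall_mul_mul_eq_smul hsimple
    (smul_ne_zero (inv_ne_zero hnorm.ne') hb0)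
    (exists_mul_mul_eq_smul_of_not_hasOrthogonalPairBelow hq hnq))

end OrthogonalPairs

lemma mul_eq_zero_of_star_mul_self_mul_eq_zero {A : Type*} [NonUnitalNormedRing A] [StarRing A]
    [CStarRing A] {u v : A} (h : star u * u * v = 0) : u * v = 0 := by
  rw [← CStarRing.star_mul_self_eq_zero_iff, star_mul, mul_assoc, ← mul_assoc (star u), h,
    mul_zero]

section SquareZero

variable {A : Type*} [CStarAlgebra A] [PartialOrder A] [StarOrderedRing A]

lemma exists_ne_zero_mul_self_eq_zero_le (hsimple : IsSimpleCStarAlgebra A) {f h : A}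
    (hf : 0 ≤ f) (hh : 0 ≤ h) (hf0 : f ≠ 0) (hh0 : h ≠ 0) (hfh : f * h = 0) :
    ∃ x : A, x ≠ 0 ∧ x * x = 0 ∧
      ∃ K : ℝ, 0 ≤ K ∧ x * star x + star x * x ≤ K • (f + h) := by
  set F := CFC.sqrt f
  set H := CFC.sqrt h
  have hF : star F = F := (IsSelfAdjoint.of_nonneg (CFC.sqrt_nonneg f)).star_eq
  have hH : star H = H := (IsSelfAdjoint.of_nonneg (CFC.sqrt_nonneg h)).star_eq
  have hFF : F * F = f := CFC.sqrt_mul_sqrt_self f hf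
  have hHH : H * H = h := CFC.sqrt_mul_sqrt_self h hh
  have hHF : H * F = 0 := by
    have hFh : F * h = 0 := mul_eq_zero_of_star_mul_self_mul_eq_zero (by rw [hF, hFF, hfh])
    have hhF : h * F = 0 := by
      simpa [hF, (IsSelfAdjoint.of_nonneg hh).star_eq] using congrArg star hFh
    exact mul_eq_zero_of_star_mul_self_mul_eq_zero (by rw [hH, hHH, hhF])
  obtain ⟨z, hz⟩ := exists_mul_mul_ne_zero hsimple (x := F) (y := H)
    (fun h0 => hf0 (by rw [← hFF, h0, zero_mul])) (fun h0 => hh0 (by rw [← hHH, h0, zero_mul]))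
  have hstar : star (F * z * H) = H * star z * F := by rw [star_mul, star_mul, hF, hH, mul_assoc]
  set w₁ := z * h * star z
  set w₂ := star z * f * z
  have h₁ : F * z * H * star (F * z * H) ≤ ‖w₁‖ • f := by
    have e : F * z * H * star (F * z * H) = star F * w₁ * F := by
      rw [hstar, hF]
      simp only [w₁, ← hHH]
      noncomm_ring
    simpa only [e, hF, hFF] using CStarAlgebra.star_left_conjugate_le_norm_smul (a := F)
      (.of_nonneg (star_right_conjugate_nonneg hh z))
  have h₂ : star (F * z * H) * (F * z * H) ≤ ‖w₂‖ • h := by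
    have e : star (F * z * H) * (F * z * H) = star H * w₂ * H := by
      rw [hstar, hH]
      simp only [w₂, ← hFF]
      noncomm_ring
    simpa only [e, hH, hHH] using CStarAlgebra.star_left_conjugate_le_norm_smul (a := H)
      (.of_nonneg (star_left_conjugate_nonneg hf z))
  refine ⟨F * z * H, hz, ?_, ‖w₁‖ + ‖w₂‖, by positivity, ?_⟩
  · rw [show F * z * H * (F * z * H) = F * z * (H * F) * z * H by noncomm_ring, hHF]
    simp
  · calc F * z * H * star (F * z * H) + star (F * z * H) * (F * z * H)
        ≤ ‖w₁‖ • f + ‖w₂‖ • h := add_le_add h₁ h₂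
      _ ≤ (‖w₁‖ + ‖w₂‖) • f + (‖w₁‖ + ‖w₂‖) • h := by
        refine add_le_add (smul_le_smul_of_nonneg_right ?_ hf)
          (smul_le_smul_of_nonneg_right ?_ hh) <;> linarith [norm_nonneg w₁, norm_nonneg w₂]
      _ = (‖w₁‖ + ‖w₂‖) • (f + h) := (smul_add ..).symm

end SquareZero

/-- In an infinite-dimensional unital simple C*-algebra, below any nonzero
positive element `b` one finds two orthogonal, Cuntz equivalent, norm-one
positive elements `b₁, b₂` with `b₁ + b₂ ≾ b`. -/
theorem exists_orthogonal_cuntz_equivalent_below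
    {A : Type*} [CStarAlgebra A] [PartialOrder A] [StarOrderedRing A]
    (hsimple : IsSimpleCStarAlgebra A)
    (hinfdim : ¬ FiniteDimensional ℂ A)
    (b : A) (hb : 0 ≤ b) (hb0 : b ≠ 0) :
    ∃ b₁ b₂ : A, 0 ≤ b₁ ∧ 0 ≤ b₂ ∧ ‖b₁‖ = 1 ∧ ‖b₂‖ = 1 ∧
      b₁ * b₂ = 0 ∧ CuntzSubeq b₁ b₂ ∧ CuntzSubeq b₂ b₁ ∧
      CuntzSubeq (b₁ + b₂) b := by
  obtain ⟨f, h, hf, hh, hf0, hh0, hfh, hfhb⟩ :=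
    hasOrthogonalPairBelow_of_isSimple hsimple hinfdim hb hb0
  obtain ⟨x, hx0, hxx, K, hK, hxK⟩ := exists_ne_zero_mul_self_eq_zero_le hsimple hf hh hf0 hh0 hfh
  set c := (‖x‖ ^ 2)⁻¹
  have hc : 0 ≤ c := by positivity
  have hnorm : ∀ y : A, ‖y‖ = ‖x‖ ^ 2 → ‖c • y‖ = 1 := fun y hy => by
    rw [norm_smul, Real.norm_of_nonneg hc, hy, inv_mul_cancel₀ (by positivity)]
  refine ⟨c • (x * star x), c • (star x * x), smul_nonneg hc (mul_star_self_nonneg x),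
    smul_nonneg hc (star_mul_self_nonneg x),
    hnorm _ (by rw [CStarRing.norm_self_mul_star, sq]),
    hnorm _ (by rw [CStarRing.norm_star_mul_self, sq]), ?_, cuntzSubeq_smul_mul_star_self hc x,
    by simpa using cuntzSubeq_smul_mul_star_self hc (star x), ?_⟩
  · rw [smul_mul_smul_comm, show x * star x * (star x * x) = x * star (x * x) * x by
      rw [star_mul]; noncomm_ring, hxx, star_zero, mul_zero, zero_mul, smul_zero]
  · rw [← smul_add]
    refine cuntzSubeq_of_le_smul (smul_nonneg hc (add_nonneg (mul_star_self_nonneg x)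
      (star_mul_self_nonneg x))) (by positivity : 0 ≤ c * K) ?_
    calc c • (x * star x + star x * x) ≤ c • (K • (f + h)) := smul_le_smul_of_nonneg_left hxK hc
      _ ≤ c • (K • b) := smul_le_smul_of_nonneg_left (smul_le_smul_of_nonneg_left hfhb hK) hc
      _ = (c * K) • b := smul_smul ..
end

section
/- Let A be a C*-algebra, let a, b ∈ A be positive elements, and let ε > 0 satisfy ‖a − b‖ < ε. Then (a − ε)₊ is Cuntz subequivalent to b, where (a − ε)₊ denotes the positive element obtained by applying the continuous function t ↦ max(t − ε, 0) to a via the continuous functional calculus. -/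
/-!
Write `ε₀ = ‖a - b‖ < ε` and `e = f(a)`, where `f(t)² (t - ε₀) = (t - ε)₊`. Since
`e (a - b) e ≤ ε₀ e²`, we get `(a - ε)₊ = e a e - ε₀ e² ≤ e b e`, so it suffices that `p ≤ q`
implies `p ≾ q`. For that take `c = √p` and `w = g(q)` with `g(t) = √t / (t + δ)`: then
`p - c w q w c = c (1 - ψ(q)) c` with `ψ(t) = (t / (t + δ))²`, and since `c² ≤ q` its norm is at most
`‖(1 - ψ(q)) q‖ ≤ 2δ`.
-/

open Filter Topology

lemma one_sub_div_add_sq_mul_le {δ t : ℝ} (hδ : 0 < δ) (ht : 0 ≤ t) :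
    (1 - (t / (t + δ)) ^ 2) * t ≤ 2 * δ := by
  rw [div_pow, one_sub_div (by positivity), div_mul_eq_mul_div, div_le_iff₀ (by positivity)]
  nlinarith [mul_nonneg ht (sq_nonneg δ), pow_pos hδ 3]

lemma norm_star_mul_cfc_mul_sub_le {A : Type*} [CStarAlgebra A] [PartialOrder A]
    [StarOrderedRing A] {c q : A} (hcq : c * star c ≤ q) {f : ℝ → ℝ}
    (hf : ContinuousOn f (spectrum ℝ q)) (hf_le : ∀ t ∈ spectrum ℝ q, f t ≤ 1) {M : ℝ}
    (hM₀ : 0 ≤ M) (hM : ∀ t ∈ spectrum ℝ q, (1 - f t) * t ≤ M) :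
    ‖star c * cfc f q * c - star c * c‖ ≤ M := by
  have hq : 0 ≤ q := (mul_star_self_nonneg c).trans hcq
  have hg : ContinuousOn (fun t => √(1 - f t)) (spectrum ℝ q) :=
    Real.continuous_sqrt.comp_continuousOn (continuousOn_const.sub hf)
  set u := cfc (fun t => √(1 - f t)) q
  have hu : IsSelfAdjoint u := .of_nonneg (cfc_nonneg fun _ _ => Real.sqrt_nonneg _)
  have huu : u * u = 1 - cfc f q := by
    rw [← cfc_mul .., ← cfc_const_one ℝ q, ← cfc_sub ..]
    exact cfc_congr fun t ht => Real.mul_self_sqrt (sub_nonneg.2 (hf_le t ht))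
  have huqu : u * q * u = cfc (fun t => (1 - f t) * t) q := by
    conv_lhs => rw [← cfc_id' ℝ q, ← cfc_mul .., ← cfc_mul ..]
    refine cfc_congr fun t ht => ?_
    rw [mul_right_comm, Real.mul_self_sqrt (sub_nonneg.2 (hf_le t ht))]
  have hstar : star (u * c) = star c * u := by rw [star_mul, hu.star_eq]
  calc ‖star c * cfc f q * c - star c * c‖
      = ‖star (u * c) * (u * c)‖ := by
        rw [← norm_neg, neg_sub, hstar, mul_assoc (star c) u, ← mul_assoc u u c, huu]
        noncomm_ring
    _ = ‖u * (c * star c) * u‖ := by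
        rw [CStarRing.norm_star_mul_self, ← CStarRing.norm_self_mul_star, hstar]
        noncomm_ring
    _ ≤ ‖u * q * u‖ := CStarAlgebra.norm_le_norm_of_nonneg_of_le
        (hu.conjugate_nonneg (mul_star_self_nonneg c)) (hu.conjugate_le_conjugate hcq)
    _ ≤ M := by
        rw [huqu]
        refine norm_cfc_le hM₀ fun t ht => ?_
        rw [Real.norm_of_nonneg (mul_nonneg (sub_nonneg.2 (hf_le t ht))
          (spectrum_nonneg_of_nonneg hq ht))]
        exact hM t ht

section NonUnital

variable {A : Type*} [NonUnitalCStarAlgebra A]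

lemma CuntzSubeq.of_star_right_conjugate {p q x : A} (h : CuntzSubeq p (x * q * star x)) :
    CuntzSubeq p q := by
  obtain ⟨r, hr⟩ := h
  refine ⟨fun n => r n * x, ?_⟩
  simpa only [star_mul, mul_assoc] using hr

variable [PartialOrder A] [StarOrderedRing A]

lemma cfcₙ_sqrt_div_mul_mul_self {q : A} (hq : 0 ≤ q) {δ : ℝ} (hδ : 0 < δ) :
    cfcₙ (fun t => √t / (max t 0 + δ)) q * q * cfcₙ (fun t => √t / (max t 0 + δ)) q =
      cfcₙ (fun t => (t / (t + δ)) ^ 2) q := by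
  have hcont : ContinuousOn (fun t : ℝ => √t / (max t 0 + δ)) (quasispectrum ℝ q) :=
    (Real.continuous_sqrt.div (by fun_prop) fun t => by positivity).continuousOn
  -- hides the `q` inside `w` from the rewrite below
  set w := cfcₙ (fun t => √t / (max t 0 + δ)) q
  conv_lhs => rw [← cfcₙ_id' ℝ q, ← cfcₙ_mul .., ← cfcₙ_mul ..]
  refine cfcₙ_congr fun t htq => ?_
  have ht : 0 ≤ t := quasispectrum_nonneg_of_nonneg q hq t htq
  rw [max_eq_left ht]
  field_simp
  rw [Real.sq_sqrt ht]
  ring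

lemma norm_star_mul_cfcₙ_mul_sub_le {c q : A} (hcq : c * star c ≤ q) {δ : ℝ} (hδ : 0 < δ) :
    ‖star c * cfcₙ (fun t => (t / (t + δ)) ^ 2) q * c - star c * c‖ ≤ 2 * δ := by
  have hq : 0 ≤ q := (mul_star_self_nonneg c).trans hcq
  have hQ : 0 ≤ (q : Unitization ℂ A) := Unitization.inr_nonneg_iff.mpr hq
  rw [← Unitization.norm_inr (𝕜 := ℂ), Unitization.inr_sub, Unitization.inr_mul,
    Unitization.inr_mul, Unitization.inr_mul, Unitization.inr_star,
    Unitization.real_cfcₙ_eq_cfc_inr q _ (by simp)]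
  have hspec : ∀ t ∈ spectrum ℝ (q : Unitization ℂ A), 0 ≤ t :=
    fun t ht => spectrum_nonneg_of_nonneg hQ ht
  refine norm_star_mul_cfc_mul_sub_le ?_ ?_ (fun t ht => ?_) (by positivity)
    fun t ht => one_sub_div_add_sq_mul_le hδ (hspec t ht)
  · rw [← Unitization.inr_star, ← Unitization.inr_mul]
    exact (Unitization.inr_le_iff _ _ (.mul_star_self c) (.of_nonneg hq)).mpr hcq
  · exact (continuousOn_id.div (continuousOn_id.add continuousOn_const)
      fun t ht => (add_pos_of_nonneg_of_pos (hspec t ht) hδ).ne').pow 2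
  · have ht := hspec t ht
    exact pow_le_one₀ (by positivity) (div_le_one_of_le₀ (by linarith) (by positivity))

lemma CuntzSubeq.of_le {p q : A} (hp : 0 ≤ p) (hpq : p ≤ q) : CuntzSubeq p q := by
  set c := CFC.sqrt p
  have hc : IsSelfAdjoint c := .of_nonneg (CFC.sqrt_nonneg p)
  have hcc : c * c = p := CFC.sqrt_mul_sqrt_self p
  have hq : 0 ≤ q := hp.trans hpq
  set δ : ℕ → ℝ := fun n => 1 / (n + 1)
  refine ⟨fun n => c * cfcₙ (fun t => √t / (max t 0 + δ n)) q, ?_⟩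
  have hδ_lim : Tendsto (fun n => 2 * δ n) atTop (𝓝 0) := by
    simpa [δ] using tendsto_one_div_add_atTop_nhds_zero_nat.const_mul (2 : ℝ)
  refine squeeze_zero (fun n => norm_nonneg _) (fun n => ?_) hδ_lim
  have hδ : 0 < δ n := Nat.one_div_pos_of_nat
  have hw : IsSelfAdjoint (cfcₙ (fun t => √t / (max t 0 + δ n)) q) := cfcₙ_predicate _ _
  have hbound := norm_star_mul_cfcₙ_mul_sub_le (c := c) (q := q) (by rwa [hc.star_eq, hcc]) hδ
  rw [hc.star_eq, hcc, ← cfcₙ_sqrt_div_mul_mul_self hq hδ] at hbound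
  simpa only [star_mul, hc.star_eq, hw.star_eq, mul_assoc] using hbound

lemma exists_cfcₙ_max_sub_le_mul_mul_star {a b : A} (ha : IsSelfAdjoint a)
    (hb : IsSelfAdjoint b) {ε : ℝ} (h : ‖a - b‖ < ε) :
    ∃ e : A, cfcₙ (fun t : ℝ => max (t - ε) 0) a ≤ e * b * star e := by
  set ε₀ := ‖a - b‖
  set f : ℝ → ℝ := fun t => √((max t ε - ε) / (max t ε - ε₀))
  have hden : ∀ t, 0 < max t ε - ε₀ := fun t => sub_pos.2 (h.trans_le (le_max_right t ε))
  have hf : Continuous f :=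
    Real.continuous_sqrt.comp ((by fun_prop : Continuous fun t : ℝ => max t ε - ε).div
      (by fun_prop) fun t => (hden t).ne')
  have hf0 : f 0 = 0 := by
    simp [f, max_eq_right ((norm_nonneg _).trans h.le)]
  have hf_sq : ∀ t, f t * f t * (t - ε₀) = max (t - ε) 0 := by
    intro t
    rw [Real.mul_self_sqrt (div_nonneg (by simp) (hden t).le)]
    rcases le_total t ε with ht | ht
    · simp [max_eq_right ht, sub_nonpos.2 ht]
    · rw [max_eq_left ht, max_eq_left (sub_nonneg.2 ht),
        div_mul_cancel₀ _ (sub_pos.2 (h.trans_le ht)).ne']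
  set e := cfcₙ f a
  have he : IsSelfAdjoint e := cfcₙ_predicate _ _
  have hcfc : cfcₙ (fun t : ℝ => max (t - ε) 0) a = e * a * e - ε₀ • (e * e) :=
    calc cfcₙ (fun t : ℝ => max (t - ε) 0) a
        = cfcₙ (fun t => f t * t * f t - ε₀ * (f t * f t)) a :=
          cfcₙ_congr fun t _ => by rw [← hf_sq t]; ring
      _ = e * a * e - ε₀ • (e * e) := by
          rw [cfcₙ_sub (fun t => f t * t * f t) (fun t => ε₀ * (f t * f t)) a (by fun_prop)
              (by simp [hf0]) (by fun_prop) (by simp [hf0]),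
            cfcₙ_const_mul ε₀ (fun t => f t * f t) a (by fun_prop) (by simp [hf0]),
            cfcₙ_mul (fun t => f t * t) f a (by fun_prop) (by simp [hf0]) (by fun_prop) hf0,
            cfcₙ_mul f (fun t => t) a (by fun_prop) hf0 (by fun_prop) rfl,
            cfcₙ_mul f f a (by fun_prop) hf0 (by fun_prop) hf0, cfcₙ_id' ℝ a]
  refine ⟨e, ?_⟩
  have hab := CStarAlgebra.star_right_conjugate_le_norm_smul (a := e) (ha.sub hb)
  rw [he.star_eq] at hab ⊢
  rw [mul_sub, sub_mul] at hab
  rw [hcfc]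
  exact sub_le_comm.mp hab

end NonUnital

theorem cuntzSubeq_of_norm_sub_lt_general
    {A : Type*} [NonUnitalCStarAlgebra A] [PartialOrder A] [StarOrderedRing A]
    (a b : A) (ha : 0 ≤ a) (hb : 0 ≤ b) (ε : ℝ)
    (h : ‖a - b‖ < ε) :
    CuntzSubeq (cfcₙ (fun t : ℝ => max (t - ε) 0) a) b := by
  obtain ⟨e, he⟩ := exists_cfcₙ_max_sub_le_mul_mul_star ha.isSelfAdjoint hb.isSelfAdjoint h
  exact (CuntzSubeq.of_le (cfcₙ_nonneg fun _ _ => le_max_right _ _) he).of_star_right_conjugate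

/-- If `a, b` are positive and `‖a - b‖ < ε`, then `(a - ε)₊ ≾ b`, where
`(a - ε)₊` is obtained by applying `t ↦ max (t - ε) 0` to `a` via the
continuous functional calculus. -/
theorem cuntzSubeq_of_norm_sub_lt
    {A : Type*} [NonUnitalCStarAlgebra A] [PartialOrder A] [StarOrderedRing A]
    (a b : A) (ha : 0 ≤ a) (hb : 0 ≤ b) (ε : ℝ) (hε : 0 < ε)
    (h : ‖a - b‖ < ε) :
    CuntzSubeq (cfcₙ (fun t : ℝ => max (t - ε) 0) a) b :=
  cuntzSubeq_of_norm_sub_lt_general a b ha hb ε h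
end

section
/- Let A be a C*-algebra and let a, b, c, d ∈ A be positive elements such that ab = 0, cd = 0, a is Cuntz subequivalent to c, and b is Cuntz subequivalent to d. Then a + b is Cuntz subequivalent to c + d. -/
/-!
Approximate `a` by `r c r*` and `b` by `s d s*`. For `ε > 0` let `e = g_ε(c)` and `f = g_ε(d)`
with `g_ε(x) = min (x / ε) 1`. Since `c d = 0`, functional calculus gives `e d = d e = 0` and
`f c = c f = 0`, so `(r e + s f)(c + d)(r e + s f)* = r (e c e) r* + s (f d f) s*`; and
`‖e c e - c‖ ≤ ε`. Hence `r c r* + s d s*`, and then `a + b`, lies in the closure of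
`{t (c + d) t*}`, which is what `a + b ≾ c + d` means.
-/

open Filter Topology

lemma mul_add_mul_mul_star_eq_of_mul_eq_zero {R : Type*} [NonUnitalRing R] [StarRing R]
    {c d e f : R} (r s : R) (he : IsSelfAdjoint e) (hf : IsSelfAdjoint f)
    (hed : e * d = 0) (hde : d * e = 0) (hfc : f * c = 0) (hcf : c * f = 0) :
    (r * e + s * f) * (c + d) * star (r * e + s * f) =
      r * (e * c * e) * star r + s * (f * d * f) * star s := by
  have hed' (x : R) : e * (d * x) = 0 := by rw [← mul_assoc, hed, zero_mul]
  have hde' (x : R) : d * (e * x) = 0 := by rw [← mul_assoc, hde, zero_mul]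
  have hfc' (x : R) : f * (c * x) = 0 := by rw [← mul_assoc, hfc, zero_mul]
  have hcf' (x : R) : c * (f * x) = 0 := by rw [← mul_assoc, hcf, zero_mul]
  rw [star_add, star_mul, star_mul, he.star_eq, hf.star_eq]
  simp only [mul_add, add_mul, mul_assoc, hed', hde', hfc', hcf', mul_zero, add_zero, zero_add]

section CStarAlgebra

variable {A : Type*} [NonUnitalCStarAlgebra A]

theorem cuntzSubeq_iff_mem_closure {a b : A} :
    CuntzSubeq a b ↔ a ∈ closure (Set.range fun r : A => r * b * star r) := by
  rw [mem_closure_iff_seq_limit]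
  constructor
  · rintro ⟨r, hr⟩
    exact ⟨_, fun n => ⟨r n, rfl⟩, tendsto_iff_norm_sub_tendsto_zero.2 hr⟩
  · rintro ⟨x, hx, hlim⟩
    choose r hr using hx
    refine ⟨r, tendsto_iff_norm_sub_tendsto_zero.1 ?_⟩
    simpa only [hr] using hlim

lemma cfcₙ_mul_eq_zero_of_mul_eq_zero {c d : A} (hcd : c * d = 0) (g : ℝ → ℝ) :
    cfcₙ g c * d = 0 :=
  cfcₙ_cases (· * d = 0) c g (zero_mul d) fun _ _ hc =>
    ContinuousMapZero.nonUnitalStarAlgHom_apply_mul_eq_zero _ d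
      (by rwa [cfcₙHom_id]) (by rwa [star_trivial, cfcₙHom_id]) (cfcₙHom_continuous hc) _

lemma mul_cfcₙ_eq_zero_of_mul_eq_zero {c d : A} (hdc : d * c = 0) (g : ℝ → ℝ) :
    d * cfcₙ g c = 0 :=
  cfcₙ_cases (d * · = 0) c g (mul_zero d) fun _ _ hc =>
    ContinuousMapZero.mul_nonUnitalStarAlgHom_apply_eq_zero _ d
      (by rwa [cfcₙHom_id]) (by rwa [star_trivial, cfcₙHom_id]) (cfcₙHom_continuous hc) _

variable [PartialOrder A] [StarOrderedRing A]

lemma norm_cfcₙ_mul_mul_cfcₙ_sub_le {c : A} (hc : 0 ≤ c) {ε : ℝ} (hε : 0 < ε) :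
    ‖cfcₙ (fun x => min (x / ε) 1) c * c * cfcₙ (fun x => min (x / ε) 1) c - c‖ ≤ ε := by
  have hcfc : cfcₙ (fun x => min (x / ε) 1) c * c * cfcₙ (fun x => min (x / ε) 1) c - c =
      cfcₙ (fun x => min (x / ε) 1 * x * min (x / ε) 1 - x) c := by
    rw [cfcₙ_sub _ _ c, cfcₙ_mul _ _ c, cfcₙ_mul _ _ c, cfcₙ_id' ℝ c]
  rw [hcfc]
  refine norm_cfcₙ_le fun x hx => ?_
  have hx0 : 0 ≤ x := quasispectrum_nonneg_of_nonneg c hc x hx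
  rw [Real.norm_eq_abs, abs_le]
  rcases min_cases (x / ε) 1 with ⟨hmin, hle⟩ | ⟨hmin, -⟩
  · rw [hmin]
    have hxε : x ≤ ε := (div_le_one hε).1 hle
    have ht : 0 ≤ x / ε := by positivity
    constructor <;>
      nlinarith [mul_nonneg hx0 (mul_nonneg ht ht), mul_le_mul hle hle ht zero_le_one]
  · rw [hmin]
    constructor <;> linarith

lemma tendsto_cfcₙ_mul_mul_cfcₙ {c : A} (hc : 0 ≤ c) :
    Tendsto (fun ε : ℝ => cfcₙ (fun x => min (x / ε) 1) c * c * cfcₙ (fun x => min (x / ε) 1) c)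
      (𝓝[>] 0) (𝓝 c) := by
  rw [tendsto_iff_norm_sub_tendsto_zero]
  refine squeeze_zero' (.of_forall fun _ => norm_nonneg _) ?_
    (tendsto_nhdsWithin_of_tendsto_nhds tendsto_id)
  filter_upwards [self_mem_nhdsWithin] with ε hε using norm_cfcₙ_mul_mul_cfcₙ_sub_le hc hε

lemma conj_add_conj_mem_closure_of_mul_eq_zero {c d : A} (hc : 0 ≤ c) (hd : 0 ≤ d)
    (hcd : c * d = 0) (r s : A) :
    r * c * star r + s * d * star s ∈ closure (Set.range fun t : A => t * (c + d) * star t) := by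
  have hdc : d * c = 0 := by
    simpa [(IsSelfAdjoint.of_nonneg hc).star_eq, (IsSelfAdjoint.of_nonneg hd).star_eq]
      using congr(star $hcd)
  set e : ℝ → A := fun ε => cfcₙ (fun x => min (x / ε) 1) c
  set f : ℝ → A := fun ε => cfcₙ (fun x => min (x / ε) 1) d
  have hconj (ε : ℝ) : (r * e ε + s * f ε) * (c + d) * star (r * e ε + s * f ε) =
      r * (e ε * c * e ε) * star r + s * (f ε * d * f ε) * star s :=
    mul_add_mul_mul_star_eq_of_mul_eq_zero r s (cfcₙ_predicate _ c) (cfcₙ_predicate _ d)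
      (cfcₙ_mul_eq_zero_of_mul_eq_zero hcd _) (mul_cfcₙ_eq_zero_of_mul_eq_zero hdc _)
      (cfcₙ_mul_eq_zero_of_mul_eq_zero hdc _) (mul_cfcₙ_eq_zero_of_mul_eq_zero hcd _)
  have hlim : Tendsto (fun ε => (r * e ε + s * f ε) * (c + d) * star (r * e ε + s * f ε))
      (𝓝[>] 0) (𝓝 (r * c * star r + s * d * star s)) := by
    simp_rw [hconj]
    exact (((tendsto_cfcₙ_mul_mul_cfcₙ hc).const_mul r).mul_const _).add
      (((tendsto_cfcₙ_mul_mul_cfcₙ hd).const_mul s).mul_const _)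
  exact mem_closure_of_tendsto hlim (.of_forall fun ε => ⟨_, rfl⟩)

end CStarAlgebra

theorem cuntzSubeq_add_of_orthogonal_general
    {A : Type*} [NonUnitalCStarAlgebra A] [PartialOrder A] [StarOrderedRing A]
    (a b c d : A) (hc : 0 ≤ c) (hd : 0 ≤ d)
    (hcd : c * d = 0)
    (hac : CuntzSubeq a c) (hbd : CuntzSubeq b d) :
    CuntzSubeq (a + b) (c + d) := by
  rw [cuntzSubeq_iff_mem_closure] at hac hbd ⊢
  rw [← closure_closure]
  refine map_mem_closure₂ continuous_add hac hbd ?_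
  rintro _ ⟨r, rfl⟩ _ ⟨s, rfl⟩
  exact conj_add_conj_mem_closure_of_mul_eq_zero hc hd hcd r s

/-- If `a, b, c, d` are positive, `a ⟂ b`, `c ⟂ d`, `a ≾ c` and `b ≾ d`, then
`a + b ≾ c + d`. -/
theorem cuntzSubeq_add_of_orthogonal
    {A : Type*} [NonUnitalCStarAlgebra A] [PartialOrder A] [StarOrderedRing A]
    (a b c d : A) (ha : 0 ≤ a) (hb : 0 ≤ b) (hc : 0 ≤ c) (hd : 0 ≤ d)
    (hab : a * b = 0) (hcd : c * d = 0)
    (hac : CuntzSubeq a c) (hbd : CuntzSubeq b d) :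
    CuntzSubeq (a + b) (c + d) :=
  cuntzSubeq_add_of_orthogonal_general a b c d hc hd hcd hac hbd
end
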